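/- Let E be a real inner product space, τ > 0, c^u, c^a ∈ E nonzero, and g(x) := exp(τ·cos(x,c^u)) / (exp(τ·cos(x,c^u)) + exp(τ·cos(x,c^a))) where cos(x,c) := ⟪x, c⟫ / (‖x‖ · ‖c‖). Let Γ ∈ ℝ, let x ∈ E be nonzero with g(x) > Γ, and let δ ∈ E satisfy ‖δ‖ ≤ (1 − τ/(τ + 2·(g(x) − Γ))) · ‖x‖. Then |g(x + δ) − g(x)| ≤ g(x) − Γ. -/

import Mathlib

/-- Cosine similarity of two vectors in a real inner product space. -/
noncomputable def cosSim {E : Type*} [NormedAddCommGroup E] [InnerProductSpace ℝ E]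
    (x c : E) : ℝ :=
  (inner ℝ x c : ℝ) / (‖x‖ * ‖c‖)

/-- The Espresso confidence function
`g(x) = exp(τ·cos(x,cᵘ)) / (exp(τ·cos(x,cᵘ)) + exp(τ·cos(x,cᵃ)))`. -/
noncomputable def espressoG {E : Type*} [NormedAddCommGroup E] [InnerProductSpace ℝ E]
    (τ : ℝ) (cu ca : E) (x : E) : ℝ :=
  Real.exp (τ * cosSim x cu) /
    (Real.exp (τ * cosSim x cu) + Real.exp (τ * cosSim x ca))


/-!
Writing `g` as a logistic function `g x = σ(τ (cos(x,cᵘ) - cos(x,cᵃ)))`, it suffices that `σ` is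
`1/4`-Lipschitz (as `σ' = σ(1 - σ) ≤ 1/4`) and that both cosines move by at most
`‖x/‖x‖ - y/‖y‖‖ ≤ 2‖x - y‖ / (‖x‖ + ‖y‖)` (the Dunkl–Williams inequality of inner product
spaces). Together, `|g(x + δ) - g x| ≤ τ‖δ‖ / (‖x + δ‖ + ‖x‖) ≤ τ‖δ‖ / (2‖x‖ - ‖δ‖)`, and the
bound on `‖δ‖` makes the last quotient at most `g x - Γ`.
-/

open Real
open scoped InnerProductSpace

lemma Real.lipschitzWith_sigmoid : LipschitzWith (1 / 4) sigmoid := by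
  refine lipschitzWith_of_nnnorm_deriv_le differentiable_sigmoid fun t => ?_
  rw [← NNReal.coe_le_coe, coe_nnnorm, deriv_sigmoid, norm_of_nonneg
    (mul_nonneg (sigmoid_nonneg t) (sub_nonneg.2 (sigmoid_le_one t)))]
  push_cast
  nlinarith [sq_nonneg (sigmoid t - 1 / 2)]

lemma Real.exp_div_exp_add_exp_eq_sigmoid (a b : ℝ) :
    exp a / (exp a + exp b) = sigmoid (a - b) := by
  rw [sigmoid_def, neg_sub, exp_sub]
  field_simp

section InnerProductSpace

variable {E : Type*} [NormedAddCommGroup E] [InnerProductSpace ℝ E]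

lemma norm_sub_mul_add_le_two_mul_norm_smul_sub_smul {u v : E} (hu : ‖u‖ = 1) (hv : ‖v‖ = 1)
    {a b : ℝ} (ha : 0 ≤ a) (hb : 0 ≤ b) :
    ‖u - v‖ * (a + b) ≤ 2 * ‖a • u - b • v‖ := by
  have huv : |⟪u, v⟫_ℝ| ≤ 1 := by simpa [hu, hv] using abs_real_inner_le_norm u v
  have hsq : (‖u - v‖ * (a + b)) ^ 2 ≤ (2 * ‖a • u - b • v‖) ^ 2 := by
    rw [mul_pow, mul_pow, norm_sub_sq_real, norm_sub_sq_real, norm_smul, norm_smul,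
      real_inner_smul_left, real_inner_smul_right, hu, hv, norm_of_nonneg ha, norm_of_nonneg hb]
    -- the difference of the two sides is `2 (a - b)² (1 + ⟪u, v⟫)`
    nlinarith [mul_nonneg (sq_nonneg (a - b)) (neg_le_of_abs_le huv |> neg_le_iff_add_nonneg.1)]
  exact (pow_le_pow_iff_left₀ (by positivity) (by positivity) two_ne_zero).1 hsq

/-- The Dunkl–Williams inequality. -/
lemma norm_inv_norm_smul_sub_inv_norm_smul_le (x y : E) :
    ‖‖x‖⁻¹ • x - ‖y‖⁻¹ • y‖ ≤ 2 * ‖x - y‖ / (‖x‖ + ‖y‖) := by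
  rcases eq_or_ne x 0 with rfl | hx
  · rcases eq_or_ne y 0 with rfl | hy
    · simp
    · simp [norm_smul, hy]
  rcases eq_or_ne y 0 with rfl | hy
  · simp [norm_smul, hx]
  rw [le_div_iff₀ (by positivity)]
  simpa [smul_smul, hx, hy] using norm_sub_mul_add_le_two_mul_norm_smul_sub_smul
    (norm_smul_inv_norm (𝕜 := ℝ) hx) (norm_smul_inv_norm (𝕜 := ℝ) hy) (norm_nonneg x) (norm_nonneg y)

lemma cosSim_eq_inner_inv_norm_smul (x c : E) :
    cosSim x c = ⟪‖x‖⁻¹ • x, ‖c‖⁻¹ • c⟫_ℝ := by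
  rw [cosSim, real_inner_smul_left, real_inner_smul_right, div_eq_inv_mul, mul_inv]
  ring

lemma abs_cosSim_sub_cosSim_le (x y c : E) :
    |cosSim x c - cosSim y c| ≤ ‖‖x‖⁻¹ • x - ‖y‖⁻¹ • y‖ := by
  rw [cosSim_eq_inner_inv_norm_smul, cosSim_eq_inner_inv_norm_smul, ← inner_sub_left]
  calc _ ≤ ‖‖x‖⁻¹ • x - ‖y‖⁻¹ • y‖ * ‖‖c‖⁻¹ • c‖ := abs_real_inner_le_norm _ _
    _ ≤ ‖‖x‖⁻¹ • x - ‖y‖⁻¹ • y‖ := by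
      refine mul_le_of_le_one_right (norm_nonneg _) ?_
      rw [norm_smul, norm_inv, norm_norm]
      exact inv_mul_le_one

lemma espressoG_eq_sigmoid (τ : ℝ) (cu ca x : E) :
    espressoG τ cu ca x = sigmoid (τ * (cosSim x cu - cosSim x ca)) := by
  rw [espressoG, exp_div_exp_add_exp_eq_sigmoid, mul_sub]

lemma abs_espressoG_sub_espressoG_le {τ : ℝ} (hτ : 0 ≤ τ) (cu ca x y : E) :
    |espressoG τ cu ca x - espressoG τ cu ca y| ≤ τ * ‖x - y‖ / (‖x‖ + ‖y‖) := by
  have hu := abs_cosSim_sub_cosSim_le x y cu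
  have ha := abs_cosSim_sub_cosSim_le x y ca
  have hxy := norm_inv_norm_smul_sub_inv_norm_smul_le x y
  rw [espressoG_eq_sigmoid, espressoG_eq_sigmoid, ← Real.dist_eq]
  calc _ ≤ 1 / 4 * dist (τ * (cosSim x cu - cosSim x ca)) (τ * (cosSim y cu - cosSim y ca)) := by
        exact_mod_cast lipschitzWith_sigmoid.dist_le_mul _ _
    _ = τ / 4 * |(cosSim x cu - cosSim y cu) - (cosSim x ca - cosSim y ca)| := by
        rw [Real.dist_eq, ← mul_sub, abs_mul, abs_of_nonneg hτ]
        ring_nf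
    _ ≤ τ / 4 * (2 * (2 * ‖x - y‖ / (‖x‖ + ‖y‖))) := by
        gcongr
        exact (abs_sub _ _).trans (by linarith)
    _ = τ * ‖x - y‖ / (‖x‖ + ‖y‖) := by ring

end InnerProductSpace

theorem espresso_confidence_stability_general
    {E : Type*} [NormedAddCommGroup E] [InnerProductSpace ℝ E]
    (τ : ℝ) (hτ : 0 < τ) (cu ca : E)
    (Γ : ℝ) (x : E) (hgx : Γ < espressoG τ cu ca x)
    (δ : E)
    (hδ : ‖δ‖ ≤ (1 - τ / (τ + 2 * (espressoG τ cu ca x - Γ))) * ‖x‖) :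
    |espressoG τ cu ca (x + δ) - espressoG τ cu ca x| ≤
      espressoG τ cu ca x - Γ := by
  set ε := espressoG τ cu ca x - Γ
  have hε : 0 < ε := sub_pos.2 hgx
  have hδ' : ‖δ‖ * (τ + 2 * ε) ≤ 2 * ε * ‖x‖ := by
    rwa [one_sub_div (by positivity), add_sub_cancel_left, div_mul_eq_mul_div,
      le_div_iff₀ (by positivity)] at hδ
  have hxδ : ‖x‖ - ‖δ‖ ≤ ‖x + δ‖ := by
    simpa using norm_sub_norm_le x (-δ)
  calc _ ≤ τ * ‖δ‖ / (‖x + δ‖ + ‖x‖) := by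
        simpa using abs_espressoG_sub_espressoG_le hτ.le cu ca (x + δ) x
    _ ≤ ε := div_le_of_le_mul₀ (by positivity) hε.le
        (by nlinarith [mul_le_mul_of_nonneg_left hxδ hε.le, mul_nonneg hε.le (norm_nonneg δ)])

theorem espresso_confidence_stability
    {E : Type*} [NormedAddCommGroup E] [InnerProductSpace ℝ E] [CompleteSpace E]
    (τ : ℝ) (hτ : 0 < τ) (cu ca : E) (hcu : cu ≠ 0) (hca : ca ≠ 0)
    (Γ : ℝ) (x : E) (hx : x ≠ 0) (hgx : Γ < espressoG τ cu ca x)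
    (δ : E)
    (hδ : ‖δ‖ ≤ (1 - τ / (τ + 2 * (espressoG τ cu ca x - Γ))) * ‖x‖) :
    |espressoG τ cu ca (x + δ) - espressoG τ cu ca x| ≤
      espressoG τ cu ca x - Γ :=
  espresso_confidence_stability_general τ hτ cu ca Γ x hgx δ hδ
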